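/- arXiv:math/0010254 — 2 statements merged into one kernel-verified Lean document; each statement's English description precedes it below -/
import Mathlib

section
/- The poset of non-obstructing partitions of μₙ under refinement is a lattice: any two non-obstructing partitions λ₁, λ₂ of μₙ have a least upper bound (a minimum element among non-obstructing partitions coarser than both) and a greatest lower bound. -/
/-- A finite set of points of `ℂ` is in convex position (is the vertex set of a
convex polygon) if no point lies in the convex hull of the others. -/
def ConvexPos (s : Set ℂ) : Prop := ∀ z ∈ s, z ∉ convexHull ℝ (s \ {z})

/-- `l` is a partition of `x`: nonempty parts, pairwise disjoint, with union `x`. -/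
def IsPartitionOf (x : Set ℂ) (l : Set (Set ℂ)) : Prop :=
  (∀ p ∈ l, p.Nonempty) ∧ ⋃₀ l = x ∧ ∀ p ∈ l, ∀ q ∈ l, p ≠ q → Disjoint p q

/-- A partition is non-obstructing if every part is in convex position and the
convex hulls of distinct parts are disjoint. -/
def NonObstructing (l : Set (Set ℂ)) : Prop :=
  (∀ p ∈ l, ConvexPos p) ∧
  ∀ p ∈ l, ∀ q ∈ l, p ≠ q → Disjoint (convexHull ℝ p) (convexHull ℝ q)

/-- `l'` refines `l`: every part of `l'` is contained in a part of `l`. -/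
def Refines (l' l : Set (Set ℂ)) : Prop := ∀ p ∈ l', ∃ q ∈ l, p ⊆ q

lemma convexPos_mono {s t : Set ℂ} (hst : s ⊆ t) (ht : ConvexPos t) : ConvexPos s := by
  intro z hz hmem
  exact ht z (hst hz) (convexHull_mono (Set.diff_subset_diff_left hst) hmem)

lemma convexPos_of_norm_one {s : Set ℂ} (hs : ∀ z ∈ s, ‖z‖ = 1) : ConvexPos s := by
  intro z hz hmem
  set f : ℂ →ₗ[ℝ] ℝ := Complex.reLm.comp (LinearMap.mulLeft ℝ (starRingEnd ℂ z)) with hf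
  have hconv : Convex ℝ {w : ℂ | f w < 1} := convex_halfSpace_lt f.isLinear 1
  have hsub : s \ {z} ⊆ {w : ℂ | f w < 1} := by
    rintro w ⟨hws, hwz⟩
    have hwn : ‖w‖ = 1 := hs w hws
    have hzn : ‖z‖ = 1 := hs z hz
    simp only [Set.mem_setOf_eq, hf, LinearMap.comp_apply, LinearMap.mulLeft_apply,
      Complex.reLm_coe]
    set u : ℂ := starRingEnd ℂ z * w with hu
    have habs : ‖u‖ = 1 := by
      rw [hu, norm_mul, Complex.norm_conj, hzn, hwn, one_mul]
    have hle : u.re ≤ 1 := by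
      calc u.re ≤ ‖u‖ := Complex.re_le_norm u
      _ = 1 := habs
    rcases lt_or_eq_of_le hle with h | h
    · exact h
    · exfalso
      have hsq : u.re ^ 2 + u.im ^ 2 = 1 := by
        have := Complex.sq_norm u
        rw [habs] at this
        rw [Complex.normSq_apply] at this
        nlinarith [this]
      have him : u.im = 0 := by nlinarith
      have hue : u = 1 := by
        apply Complex.ext <;> simp [h, him]
      have : w = z := by
        have h2 : z * (starRingEnd ℂ z * w) = z * 1 := by rw [← hu, hue]
        rw [← mul_assoc, Complex.mul_conj, mul_one] at h2
        have h3 : (Complex.normSq z : ℂ) = 1 := by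
          rw [← Complex.sq_norm, hzn]; norm_num
        rw [h3, one_mul] at h2
        exact h2
      exact hwz this
  have hhull := convexHull_min hsub hconv
  have hz1 : f z = 1 := by
    simp only [hf, LinearMap.comp_apply, LinearMap.mulLeft_apply, Complex.reLm_coe]
    have h : starRingEnd ℂ z * z = (‖z‖ : ℂ) ^ 2 := Complex.conj_mul' z
    have hn : ‖z‖ = 1 := hs z hz
    rw [h, hn]
    norm_num
  have := hhull hmem
  simp only [Set.mem_setOf_eq, hz1] at this
  exact lt_irrefl 1 this

lemma roots_convexPos (n : ℕ) (hn : 0 < n) : ConvexPos {z : ℂ | z ^ n = 1} := by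
  apply convexPos_of_norm_one
  intro z hz
  have h : ‖z‖ ^ n = 1 := by
    rw [← norm_pow, hz, norm_one]
  have h0 : (0 : ℝ) ≤ ‖z‖ := norm_nonneg z
  have := (pow_left_inj₀ h0 zero_le_one hn.ne').mp (by rw [h, one_pow])
  exact this

/-- The poset of non-obstructing partitions of the `n`-th roots of unity under
refinement is a lattice: any two elements have a least upper bound and a
greatest lower bound. -/
theorem nonObstructing_lattice (n : ℕ) (hn : 0 < n) (l₁ l₂ : Set (Set ℂ))
    (h₁ : IsPartitionOf {z : ℂ | z ^ n = 1} l₁ ∧ NonObstructing l₁)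
    (h₂ : IsPartitionOf {z : ℂ | z ^ n = 1} l₂ ∧ NonObstructing l₂) :
    (∃ m : Set (Set ℂ), (IsPartitionOf {z : ℂ | z ^ n = 1} m ∧ NonObstructing m ∧
        Refines l₁ m ∧ Refines l₂ m) ∧
      ∀ m' : Set (Set ℂ), (IsPartitionOf {z : ℂ | z ^ n = 1} m' ∧ NonObstructing m' ∧
        Refines l₁ m' ∧ Refines l₂ m') → Refines m m') ∧
    (∃ g : Set (Set ℂ), (IsPartitionOf {z : ℂ | z ^ n = 1} g ∧ NonObstructing g ∧
        Refines g l₁ ∧ Refines g l₂) ∧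
      ∀ g' : Set (Set ℂ), (IsPartitionOf {z : ℂ | z ^ n = 1} g' ∧ NonObstructing g' ∧
        Refines g' l₁ ∧ Refines g' l₂) → Refines g' g) := by
  set X : Set ℂ := {z : ℂ | z ^ n = 1} with hX
  have hXcp : ConvexPos X := roots_convexPos n hn
  have h1X : (1 : ℂ) ∈ X := by simp [hX]
  obtain ⟨⟨h1ne, h1u, h1d⟩, h1cp, h1h⟩ := h₁
  obtain ⟨⟨h2ne, h2u, h2d⟩, h2cp, h2h⟩ := h₂
  -- parts are subsets of X
  have hp1X : ∀ p ∈ l₁, p ⊆ X := fun p hp => h1u ▸ Set.subset_sUnion_of_mem hp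
  have hp2X : ∀ p ∈ l₂, p ⊆ X := fun p hp => h2u ▸ Set.subset_sUnion_of_mem hp
  constructor
  · -- JOIN
    -- the set of all non-obstructing common upper bounds
    set U : Set (Set (Set ℂ)) :=
      {u | IsPartitionOf X u ∧ NonObstructing u ∧ Refines l₁ u ∧ Refines l₂ u} with hU
    -- the trivial partition is an upper bound
    have htop : ({X} : Set (Set ℂ)) ∈ U := by
      refine ⟨⟨?_, ?_, ?_⟩, ⟨?_, ?_⟩, ?_, ?_⟩
      · rintro p rfl; exact ⟨1, h1X⟩
      · simp
      · rintro p rfl q rfl h; exact absurd rfl h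
      · rintro p rfl; exact hXcp
      · rintro p rfl q rfl h; exact absurd rfl h
      · intro p hp; exact ⟨X, rfl, hp1X p hp⟩
      · intro p hp; exact ⟨X, rfl, hp2X p hp⟩
    -- the class of z : all points lying in the same part as z in every upper bound
    set C : ℂ → Set ℂ := fun z => {w | ∀ u ∈ U, ∀ p ∈ u, z ∈ p → w ∈ p} with hC
    have hCX : ∀ z ∈ X, C z ⊆ X := by
      intro z hz w hw
      exact hw {X} htop X rfl hz
    have hCself : ∀ z, z ∈ C z := fun z u hu p hp hzp => hzp
    -- symmetry
    have hCsymm : ∀ z ∈ X, ∀ w, w ∈ C z → z ∈ C w := by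
      intro z hz w hw u hu p hp hwp
      obtain ⟨q, hq, hzq⟩ : ∃ q ∈ u, z ∈ q := by
        have := hu.1.2.1
        have hzu : z ∈ ⋃₀ u := this.symm ▸ hz
        obtain ⟨q, hq, hzq⟩ := hzu
        exact ⟨q, hq, hzq⟩
      have hwq : w ∈ q := hw u hu q hq hzq
      by_cases hpq : p = q
      · exact hpq ▸ hzq
      · exact absurd (Set.not_disjoint_iff.2 ⟨w, hwp, hwq⟩) (fun h => h (hu.1.2.2 p hp q hq hpq))
    -- transitivity
    have hCeq : ∀ z ∈ X, ∀ t, t ∈ C z → C z = C t := by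
      intro z hz t ht
      have htX : t ∈ X := hCX z hz ht
      apply Set.Subset.antisymm
      · intro w hw u hu p hp htp
        have hzCt : z ∈ C t := hCsymm z hz t ht
        exact hw u hu p hp (hzCt u hu p hp htp)
      · intro w hw u hu p hp hzp
        exact hw u hu p hp (ht u hu p hp hzp)
    set m : Set (Set ℂ) := (fun z => C z) '' X with hm
    refine ⟨m, ⟨⟨?_, ?_, ?_⟩, ⟨?_, ?_⟩, ?_, ?_⟩, ?_⟩
    · rintro p ⟨z, hz, rfl⟩; exact ⟨z, hCself z⟩
    · apply Set.Subset.antisymm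
      · rintro w ⟨p, ⟨z, hz, rfl⟩, hw⟩
        exact hCX z hz hw
      · intro z hz
        exact ⟨C z, ⟨z, hz, rfl⟩, hCself z⟩
    · rintro p ⟨z, hz, rfl⟩ q ⟨w, hw, rfl⟩ hne
      rw [Set.disjoint_left]
      intro t htz htw
      exact hne ((hCeq z hz t htz).trans (hCeq w hw t htw).symm)
    · rintro p ⟨z, hz, rfl⟩
      exact convexPos_mono (hCX z hz) hXcp
    · rintro p ⟨z, hz, rfl⟩ q ⟨w, hw, rfl⟩ hne
      -- w ∉ C z
      have hwz : w ∉ C z := fun hwCz => hne (hCeq z hz w hwCz)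
      simp only [hC, Set.mem_setOf_eq] at hwz
      push_neg at hwz
      obtain ⟨u, hu, p', hp', hzp', hwp'⟩ := hwz
      obtain ⟨q', hq', hwq'⟩ : ∃ q' ∈ u, w ∈ q' := by
        have hwu : w ∈ ⋃₀ u := hu.1.2.1.symm ▸ hw
        obtain ⟨q', hq', hwq'⟩ := hwu
        exact ⟨q', hq', hwq'⟩
      have hne' : p' ≠ q' := fun h => hwp' (h ▸ hwq')
      have hCzp : C z ⊆ p' := fun t ht => ht u hu p' hp' hzp'
      have hCwq : C w ⊆ q' := fun t ht => ht u hu q' hq' hwq'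
      exact (hu.2.1.2 p' hp' q' hq' hne').mono (convexHull_mono hCzp) (convexHull_mono hCwq)
    · -- Refines l₁ m
      intro p hp
      obtain ⟨z, hz⟩ := h1ne p hp
      have hzX : z ∈ X := hp1X p hp hz
      refine ⟨C z, ⟨z, hzX, rfl⟩, ?_⟩
      intro w hw u hu q hq hzq
      obtain ⟨q', hq', hpq'⟩ := hu.2.2.1 p hp
      have : q = q' := by
        by_contra hne
        exact absurd (Set.not_disjoint_iff.2 ⟨z, hzq, hpq' hz⟩)
          (fun h => h (hu.1.2.2 q hq q' hq' hne))
      exact this ▸ hpq' hw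
    · -- Refines l₂ m
      intro p hp
      obtain ⟨z, hz⟩ := h2ne p hp
      have hzX : z ∈ X := hp2X p hp hz
      refine ⟨C z, ⟨z, hzX, rfl⟩, ?_⟩
      intro w hw u hu q hq hzq
      obtain ⟨q', hq', hpq'⟩ := hu.2.2.2 p hp
      have : q = q' := by
        by_contra hne
        exact absurd (Set.not_disjoint_iff.2 ⟨z, hzq, hpq' hz⟩)
          (fun h => h (hu.1.2.2 q hq q' hq' hne))
      exact this ▸ hpq' hw
    · -- least upper bound
      intro m' hm'
      rintro p ⟨z, hz, rfl⟩
      obtain ⟨q, hq, hzq⟩ : ∃ q ∈ m', z ∈ q := by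
        have : z ∈ ⋃₀ m' := hm'.1.2.1.symm ▸ hz
        obtain ⟨q, hq, hzq⟩ := this
        exact ⟨q, hq, hzq⟩
      exact ⟨q, hq, fun t ht => ht m' hm' q hq hzq⟩
  · -- MEET: common refinement
    set g : Set (Set ℂ) := {s | ∃ p ∈ l₁, ∃ q ∈ l₂, s = p ∩ q ∧ s.Nonempty} with hg
    refine ⟨g, ⟨⟨?_, ?_, ?_⟩, ⟨?_, ?_⟩, ?_, ?_⟩, ?_⟩
    · rintro s ⟨p, hp, q, hq, rfl, hne⟩; exact hne
    · apply Set.Subset.antisymm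
      · rintro w ⟨s, ⟨p, hp, q, hq, rfl, -⟩, hw⟩
        exact hp1X p hp hw.1
      · intro z hz
        obtain ⟨p, hp, hzp⟩ : ∃ p ∈ l₁, z ∈ p := by
          have : z ∈ ⋃₀ l₁ := h1u.symm ▸ hz
          obtain ⟨p, hp, h⟩ := this; exact ⟨p, hp, h⟩
        obtain ⟨q, hq, hzq⟩ : ∃ q ∈ l₂, z ∈ q := by
          have : z ∈ ⋃₀ l₂ := h2u.symm ▸ hz
          obtain ⟨q, hq, h⟩ := this; exact ⟨q, hq, h⟩
        exact ⟨p ∩ q, ⟨p, hp, q, hq, rfl, ⟨z, hzp, hzq⟩⟩, hzp, hzq⟩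
    · rintro s ⟨p, hp, q, hq, rfl, -⟩ s' ⟨p', hp', q', hq', rfl, -⟩ hne
      by_cases hpp : p = p'
      · have hqq : q ≠ q' := fun h => hne (by rw [hpp, h])
        exact ((h2d q hq q' hq' hqq).mono Set.inter_subset_right Set.inter_subset_right)
      · exact ((h1d p hp p' hp' hpp).mono Set.inter_subset_left Set.inter_subset_left)
    · rintro s ⟨p, hp, q, hq, rfl, -⟩
      exact convexPos_mono (fun z hz => hp1X p hp hz.1) hXcp
    · rintro s ⟨p, hp, q, hq, rfl, -⟩ s' ⟨p', hp', q', hq', rfl, -⟩ hne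
      by_cases hpp : p = p'
      · have hqq : q ≠ q' := fun h => hne (by rw [hpp, h])
        exact (h2h q hq q' hq' hqq).mono (convexHull_mono Set.inter_subset_right)
          (convexHull_mono Set.inter_subset_right)
      · exact (h1h p hp p' hp' hpp).mono (convexHull_mono Set.inter_subset_left)
          (convexHull_mono Set.inter_subset_left)
    · rintro s ⟨p, hp, q, hq, rfl, -⟩
      exact ⟨p, hp, Set.inter_subset_left⟩
    · rintro s ⟨p, hp, q, hq, rfl, -⟩
      exact ⟨q, hq, Set.inter_subset_right⟩
    · -- greatest lower bound
      rintro g' ⟨⟨hgne, -, -⟩, -, hr1, hr2⟩ r hr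
      obtain ⟨p, hp, hrp⟩ := hr1 r hr
      obtain ⟨q, hq, hrq⟩ := hr2 r hr
      obtain ⟨z, hz⟩ := hgne r hr
      refine ⟨p ∩ q, ⟨p, hp, q, hq, rfl, ⟨z, hrp hz, hrq hz⟩⟩, ?_⟩
      exact Set.subset_inter hrp hrq
end

section
/- Let F be a free group on a finite set X of n generators, and let a finite cyclic group μ_d act on F by automorphisms permuting X without fixed points (no generator is fixed by any nontrivial element of μ_d). Then the fixed subgroup F^{μ_d} is trivial. -/
/-!
A nontrivial `g` acts as the endomorphism induced by a permutation `σ` of `X` without fixed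
points. Since `σ` is injective, this endomorphism acts letter by letter on reduced words, so a
nontrivial word fixed by `g` would have its first letter fixed by `σ`.
-/

open Function

namespace FreeGroup

variable {α β : Type*}

theorem IsReduced.map {f : α → β} (hf : Injective f) {L : List (α × Bool)} (hL : IsReduced L) :
    IsReduced (L.map fun x => (f x.1, x.2)) :=
  List.isChain_map_of_isChain _ (fun _ _ hab hfab => hab (hf hfab)) hL

theorem toWord_map_of_injective [DecidableEq α] [DecidableEq β] {f : α → β} (hf : Injective f)
    (w : FreeGroup α) : (map f w).toWord = w.toWord.map fun x => (f x.1, x.2) := by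
  conv_lhs => rw [← mk_toWord (x := w)]
  rw [map.mk, toWord_mk, (isReduced_toWord.map hf).reduce_eq]

theorem eq_one_of_map_eq_self {σ : α → α} (hσ : Injective σ) (hfix : ∀ x, σ x ≠ x)
    {w : FreeGroup α} (hw : map σ w = w) : w = 1 := by
  classical
  rw [← toWord_eq_nil_iff]
  cases hL : w.toWord with
  | nil => rfl
  | cons a L =>
    have hword := toWord_map_of_injective hσ w
    rw [hw, hL, List.map_cons, List.cons.injEq] at hword
    exact absurd (congrArg Prod.fst hword.1).symm (hfix a.1)

end FreeGroup

theorem fixed_subgroup_free_trivial_general {X : Type*}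
    {G : Type*} [Group G] [Fintype G] (d : ℕ) (hd : Fintype.card G = d)
    (hd1 : 1 < d)
    (φ : G →* MulAut (FreeGroup X))
    (hperm : ∀ g : G, ∀ x : X, ∃ y : X, φ g (FreeGroup.of x) = FreeGroup.of y)
    (hfree : ∀ g : G, g ≠ 1 → ∀ x : X, φ g (FreeGroup.of x) ≠ FreeGroup.of x) :
    ∀ w : FreeGroup X, (∀ g : G, φ g w = w) → w = 1 := by
  intro w hw
  obtain ⟨g, hg⟩ := Fintype.exists_ne_of_one_lt_card (hd ▸ hd1) (1 : G)
  choose σ hσ using hperm g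
  have hσ_inj : Injective σ := fun x y hxy =>
    FreeGroup.of_injective ((φ g).injective (by rw [hσ, hσ, hxy]))
  have hφ_eq_map : ((φ g).toMonoidHom : FreeGroup X →* FreeGroup X) = FreeGroup.map σ :=
    FreeGroup.ext_hom _ _ fun x => by simp [hσ]
  refine FreeGroup.eq_one_of_map_eq_self hσ_inj (fun x hx => hfree g hg x (by rw [hσ, hx])) ?_
  rw [← hφ_eq_map]
  exact hw g

/-- If a finite cyclic group acts on a free group on a finite set `X` of
generators by automorphisms permuting the generators, with no generator fixed by
any nontrivial group element, then the fixed subgroup is trivial. -/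
theorem fixed_subgroup_free_trivial {X : Type*} [Fintype X] (n : ℕ)
    (hcard : Fintype.card X = n)
    {G : Type*} [Group G] [Fintype G] [IsCyclic G] (d : ℕ) (hd : Fintype.card G = d)
    (hd1 : 1 < d)
    (φ : G →* MulAut (FreeGroup X))
    (hperm : ∀ g : G, ∀ x : X, ∃ y : X, φ g (FreeGroup.of x) = FreeGroup.of y)
    (hfree : ∀ g : G, g ≠ 1 → ∀ x : X, φ g (FreeGroup.of x) ≠ FreeGroup.of x) :
    ∀ w : FreeGroup X, (∀ g : G, φ g w = w) → w = 1 :=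
  fixed_subgroup_free_trivial_general d hd hd1 φ hperm hfree
end
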